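/- arXiv:2204.12958 — 4 statements merged into one kernel-verified Lean document; each statement's English description precedes it below -/
import Mathlib

section
/- Let ω : (0, 2] → [0, ∞) be a nondecreasing function with the doubling-type property ω(t) ≤ C₀ ω(s) whenever 0 < t ≤ s ≤ 4t (for some constant C₀ ≥ 1). Suppose there are ε > 0 and δ ∈ (0,1) and a constant C* > 0 with C*·ε < 1 such that ω(t) ≤ ε (ln(1/t))^{-1} for all t ∈ (0, δ). Then limsup_{r → 0+} r ∫_r^2 (ω(t)/t²) exp( C* ∫_t^2 (ω(s)/s) ds ) dt = 0. -/
/-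
Write `I t = ∫ s in t..2, ω s / s` and `h t = ω t * exp (C* * I t)`. Near `0` the bound
`ω s ≤ ε / log (1/s)` integrates to `I t ≤ ε * log (log (1/t)) + O(1)`, so
`h t = O((log (1/t)) ^ (C* ε - 1))`, which tends to `0` because `C* ε < 1`. Whenever `h t → 0`
as `t → 0⁺`, the quantity `r * ∫ t in r..2, h t / t ^ 2` tends to `0`: over `[r, σ]` it is at
most `sup_{(0, σ]} |h|`, since `∫ t in r..σ, t⁻² ≤ r⁻¹`, and the rest is `O(r)`.
Hence the limit, and with it the limsup, is `0`.
-/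

open Real Filter MeasureTheory intervalIntegral

open Set Topology

theorem integral_inv_sq {a b : ℝ} (ha : 0 < a) (hb : 0 < b) :
    ∫ t in a..b, (t ^ 2)⁻¹ = a⁻¹ - b⁻¹ := by
  have h0 : (0 : ℝ) ∉ uIcc a b := fun h => (lt_min ha hb).not_ge h.1
  have h := integral_zpow (a := a) (b := b) (n := -2) (Or.inr ⟨by norm_num, h0⟩)
  simp only [zpow_neg, zpow_ofNat] at h
  rw [h]
  norm_num
  ring

theorem tendsto_mul_integral_div_sq {g : ℝ → ℝ} {b : ℝ} (hg : Tendsto g (𝓝[>] 0) (𝓝 0))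
    (hint : ∀ᶠ r in 𝓝[>] 0, IntervalIntegrable (fun t => g t / t ^ 2) volume r b) :
    Tendsto (fun r => r * ∫ t in r..b, g t / t ^ 2) (𝓝[>] 0) (𝓝 0) := by
  rw [Metric.tendsto_nhds]
  intro η hη
  obtain ⟨σ, hσ : 0 < σ, hσg⟩ := mem_nhdsGT_iff_exists_Ioc_subset.1
    ((Metric.tendsto_nhds.1 hg _ (half_pos hη)).and hint)
  have hσint := (hσg ⟨hσ, le_rfl⟩).2
  have htail : Tendsto (fun r => r * ∫ t in σ..b, g t / t ^ 2) (𝓝[>] 0) (𝓝 0) :=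
    ((continuous_mul_const _).tendsto' 0 0 (zero_mul _)).mono_left nhdsWithin_le_nhds
  filter_upwards [Metric.tendsto_nhds.1 htail _ (half_pos hη), Ioo_mem_nhdsGT hσ]
    with r hr_tail ⟨hr, hrσ⟩
  have hrint := (hσg ⟨hr, hrσ.le⟩).2
  have hhead : ‖r * ∫ t in r..σ, g t / t ^ 2‖ ≤ η / 2 := by
    have hbound : ‖∫ t in r..σ, g t / t ^ 2‖ ≤ ∫ t in r..σ, η / 2 * (t ^ 2)⁻¹ := by
      refine norm_integral_le_of_norm_le hrσ.le (ae_of_all _ fun t ht => ?_) ?_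
      · have ht0 : 0 < t := hr.trans ht.1
        have hgt : ‖g t‖ < η / 2 := by simpa using (hσg ⟨ht0, ht.2⟩).1
        rw [norm_div, norm_pow, Real.norm_of_nonneg ht0.le, div_eq_mul_inv]
        gcongr
      · refine (continuousOn_const.mul ((continuousOn_pow 2).inv₀ fun t ht => ?_))
          |>.intervalIntegrable
        rw [uIcc_of_le hrσ.le] at ht
        exact pow_ne_zero 2 (hr.trans_le ht.1).ne'
    rw [intervalIntegral.integral_const_mul, integral_inv_sq hr hσ] at hbound
    rw [norm_mul, Real.norm_of_nonneg hr.le]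
    calc r * ‖∫ t in r..σ, g t / t ^ 2‖ ≤ r * (η / 2 * (r⁻¹ - σ⁻¹)) := by gcongr
      _ = η / 2 - η / 2 * (r / σ) := by field_simp
      _ ≤ η / 2 := sub_le_self _ (by positivity)
  rw [dist_zero_right] at hr_tail ⊢
  rw [← integral_add_adjacent_intervals (hrint.trans hσint.symm) hσint, mul_add]
  calc _ ≤ _ := norm_add_le _ _
    _ < η / 2 + η / 2 := add_lt_add_of_le_of_lt hhead hr_tail
    _ = η := add_halves η

theorem MonotoneOn.intervalIntegrable_div_pow {f : ℝ → ℝ} {b t u : ℝ}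
    (hf : MonotoneOn f (Ioc 0 b)) (n : ℕ) (ht : 0 < t) (htu : t ≤ u) (hub : u ≤ b) :
    IntervalIntegrable (fun x => f x / x ^ n) volume t u := by
  have hsub : uIcc t u ⊆ Ioc 0 b := by
    rw [uIcc_of_le htu]
    exact fun x hx => ⟨ht.trans_le hx.1, hx.2.trans hub⟩
  simpa only [div_eq_mul_inv, Pi.inv_apply] using
    (hf.mono hsub).intervalIntegrable.mul_continuousOn
      ((continuousOn_pow n).inv₀ fun x hx => pow_ne_zero n (hsub hx).1.ne')

theorem MonotoneOn.intervalIntegrable_div_self {f : ℝ → ℝ} {b t u : ℝ}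
    (hf : MonotoneOn f (Ioc 0 b)) (ht : 0 < t) (htu : t ≤ u) (hub : u ≤ b) :
    IntervalIntegrable (fun x => f x / x) volume t u := by
  simpa only [pow_one] using hf.intervalIntegrable_div_pow 1 ht htu hub

theorem integral_div_le_of_le_inv_neg_log {ω : ℝ → ℝ} {ε t u : ℝ} (ht : 0 < t) (htu : t ≤ u)
    (hu : u < 1) (hint : IntervalIntegrable (fun s => ω s / s) volume t u)
    (hω : ∀ s ∈ Ioo t u, ω s ≤ ε * (-log s)⁻¹) :
    ∫ s in t..u, ω s / s ≤ ε * (log (-log t) - log (-log u)) := by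
  have hlog : ∀ s ∈ Icc t u, 0 < s ∧ 0 < -log s := fun s hs =>
    have hs0 : 0 < s := ht.trans_le hs.1
    ⟨hs0, neg_pos.2 (log_neg hs0 (hs.2.trans_lt hu))⟩
  have hderiv : ∀ s ∈ Icc t u,
      HasDerivAt (fun s => -ε * log (-log s)) (ε * (-log s)⁻¹ / s) s := fun s hs => by
    have hneg : HasDerivAt (fun s => -log s) (-s⁻¹) s := (hasDerivAt_log (hlog s hs).1.ne').neg
    refine ((hneg.log (hlog s hs).2.ne').const_mul (-ε)).congr_deriv ?_
    field_simp
  have hφ : ∀ s ∈ Ioo t u, ω s / s ≤ ε * (-log s)⁻¹ / s := fun s hs =>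
    div_le_div_of_nonneg_right (hω s hs) (ht.trans hs.1).le
  calc ∫ s in t..u, ω s / s ≤ -ε * log (-log u) - -ε * log (-log t) :=
        integral_le_sub_of_hasDeriv_right_of_le htu
          (fun s hs => (hderiv s hs).continuousAt.continuousWithinAt)
          (fun s hs => (hderiv s (Ioo_subset_Icc_self hs)).hasDerivWithinAt)
          ((intervalIntegrable_iff_integrableOn_Icc_of_le htu).1 hint) hφ
    _ = ε * (log (-log t) - log (-log u)) := by ring

theorem exists_exp_mul_integral_le_mul_rpow_neg_log {ω : ℝ → ℝ} {b C ε u : ℝ}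
    (hmono : MonotoneOn ω (Ioc 0 b)) (hC : 0 ≤ C) (hu0 : 0 < u) (hu1 : u < 1) (hub : u ≤ b)
    (hω : ∀ s ∈ Ioc 0 u, ω s ≤ ε * (-log s)⁻¹) :
    ∃ K, ∀ t ∈ Ioc 0 u, exp (C * ∫ s in t..b, ω s / s) ≤ K * (-log t) ^ (C * ε) := by
  refine ⟨exp (C * ((∫ s in u..b, ω s / s) - ε * log (-log u))), fun t ⟨ht0, htu⟩ => ?_⟩
  have hL : 0 < -log t := neg_pos.2 (log_neg ht0 (htu.trans_lt hu1))
  have hI : ∫ s in t..b, ω s / s ≤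
      ε * (log (-log t) - log (-log u)) + ∫ s in u..b, ω s / s := by
    rw [← integral_add_adjacent_intervals (hmono.intervalIntegrable_div_self ht0 htu hub)
      (hmono.intervalIntegrable_div_self hu0 hub le_rfl)]
    exact add_le_add_left (integral_div_le_of_le_inv_neg_log ht0 htu hu1
      (hmono.intervalIntegrable_div_self ht0 htu hub)
      fun s hs => hω s ⟨ht0.trans hs.1, hs.2.le⟩) _
  calc exp (C * ∫ s in t..b, ω s / s)
      ≤ exp (C * (ε * (log (-log t) - log (-log u)) + ∫ s in u..b, ω s / s)) :=
        exp_le_exp.2 (mul_le_mul_of_nonneg_left hI hC)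
    _ = _ := by rw [rpow_def_of_pos hL, ← exp_add]; congr 1; ring

theorem tendsto_mul_exp_integral_nhdsGT_zero {ω : ℝ → ℝ} {b C ε δ : ℝ}
    (hnonneg : ∀ t ∈ Ioc 0 b, 0 ≤ ω t) (hmono : MonotoneOn ω (Ioc 0 b)) (hC : 0 ≤ C)
    (hδ0 : 0 < δ) (hδ1 : δ < 1) (hδb : δ ≤ b) (hCε : C * ε < 1)
    (hsmall : ∀ t ∈ Ioo 0 δ, ω t ≤ ε * (log (1 / t))⁻¹) :
    Tendsto (fun t => ω t * exp (C * ∫ s in t..b, ω s / s)) (𝓝[>] 0) (𝓝 0) := by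
  have hω : ∀ t ∈ Ioc 0 (δ / 2), ω t ≤ ε * (-log t)⁻¹ := fun t ht => by
    simpa only [one_div, log_inv] using hsmall t ⟨ht.1, ht.2.trans_lt (half_lt_self hδ0)⟩
  obtain ⟨K, hK⟩ :=
    exists_exp_mul_integral_le_mul_rpow_neg_log hmono hC (half_pos hδ0) (by linarith)
      (by linarith) hω
  have hbound : Tendsto (fun t => ε * K * (-log t) ^ (C * ε - 1)) (𝓝[>] 0) (𝓝 0) := by
    have := ((tendsto_rpow_neg_atTop (sub_pos.2 hCε)).comp
      (tendsto_neg_atBot_atTop.comp tendsto_log_nhdsGT_zero)).const_mul (ε * K)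
    simpa only [Function.comp_def, neg_sub, mul_zero] using this
  refine squeeze_zero' ?_ ?_ hbound <;>
    filter_upwards [Ioc_mem_nhdsGT (half_pos hδ0)] with t ht
  · exact mul_nonneg (hnonneg t ⟨ht.1, by linarith [ht.2]⟩) (exp_pos _).le
  · have hL : 0 < -log t := neg_pos.2 (log_neg ht.1 (by linarith [ht.2]))
    calc ω t * exp (C * ∫ s in t..b, ω s / s)
        ≤ ε * (-log t)⁻¹ * (K * (-log t) ^ (C * ε)) :=
          mul_le_mul (hω t ht) (hK t ht) (exp_pos _).le
            ((hnonneg t ⟨ht.1, by linarith [ht.2]⟩).trans (hω t ht))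
      _ = ε * K * (-log t) ^ (C * ε - 1) := by rw [rpow_sub hL, rpow_one]; ring

theorem intervalIntegrable_mul_exp_integral_div_sq {ω : ℝ → ℝ} {b r : ℝ}
    (hmono : MonotoneOn ω (Ioc 0 b)) (C : ℝ) (hr : 0 < r) (hrb : r ≤ b) :
    IntervalIntegrable (fun t => ω t * exp (C * ∫ s in t..b, ω s / s) / t ^ 2) volume r b := by
  have hint : IntegrableOn (fun s => ω s / s) (uIcc r b) := by
    rw [uIcc_of_le hrb, ← intervalIntegrable_iff_integrableOn_Icc_of_le hrb]
    exact hmono.intervalIntegrable_div_self hr hrb le_rfl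
  have hI : ContinuousOn (fun t => ∫ s in t..b, ω s / s) (uIcc r b) :=
    continuousOn_primitive_interval_left hint
  simpa only [div_mul_eq_mul_div, Function.comp_def, Pi.mul_apply] using
    (hmono.intervalIntegrable_div_pow 2 hr hrb le_rfl).mul_continuousOn
      (continuous_exp.comp_continuousOn (continuousOn_const.mul hI))

theorem limsup_X_eq_zero_general (ω : ℝ → ℝ) (Cstar ε δ : ℝ)
    (hnonneg : ∀ t ∈ Set.Ioc (0 : ℝ) 2, 0 ≤ ω t)
    (hmono : MonotoneOn ω (Set.Ioc (0 : ℝ) 2))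
    (hCstar : 0 < Cstar) (hδ0 : 0 < δ) (hδ1 : δ < 1)
    (hεC : Cstar * ε < 1)
    (hsmall : ∀ t ∈ Set.Ioo (0 : ℝ) δ, ω t ≤ ε * (Real.log (1 / t))⁻¹) :
    Filter.limsup
      (fun r : ℝ => r * ∫ t in r..2,
        (ω t / t ^ 2) * Real.exp (Cstar * ∫ s in t..2, ω s / s))
      (nhdsWithin 0 (Set.Ioi 0)) = 0 := by
  refine Tendsto.limsup_eq ?_
  simp_rw [div_mul_eq_mul_div]
  refine tendsto_mul_integral_div_sq (tendsto_mul_exp_integral_nhdsGT_zero hnonneg hmono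
    hCstar.le hδ0 hδ1 (by linarith) hεC hsmall) ?_
  filter_upwards [Ioc_mem_nhdsGT two_pos] with r hr
  exact intervalIntegrable_mul_exp_integral_div_sq hmono Cstar hr.1 hr.2

theorem limsup_X_eq_zero (ω : ℝ → ℝ) (C₀ Cstar ε δ : ℝ)
    (hmeas : Measurable ω)
    (hnonneg : ∀ t ∈ Set.Ioc (0 : ℝ) 2, 0 ≤ ω t)
    (hbdd : ∃ M : ℝ, ∀ t ∈ Set.Ioc (0 : ℝ) 2, ω t ≤ M)
    (hmono : MonotoneOn ω (Set.Ioc (0 : ℝ) 2))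
    (hC₀ : 1 ≤ C₀)
    (hdoubling : ∀ t s : ℝ, 0 < t → t ≤ s → s ≤ 4 * t → s ≤ 2 → ω t ≤ C₀ * ω s)
    (hCstar : 0 < Cstar) (hε : 0 < ε) (hδ0 : 0 < δ) (hδ1 : δ < 1)
    (hεC : Cstar * ε < 1)
    (hsmall : ∀ t ∈ Set.Ioo (0 : ℝ) δ, ω t ≤ ε * (Real.log (1 / t))⁻¹) :
    Filter.limsup
      (fun r : ℝ => r * ∫ t in r..2,
        (ω t / t ^ 2) * Real.exp (Cstar * ∫ s in t..2, ω s / s))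
      (nhdsWithin 0 (Set.Ioi 0)) = 0 :=
  limsup_X_eq_zero_general ω Cstar ε δ hnonneg hmono hCstar hδ0 hδ1 hεC hsmall
end

section
/- Let ω : (0, 2] → [0, ∞) be measurable and bounded, and let C* > 0. Suppose there exist b > 1/C* and δ ∈ (0,1) such that ω(t) ≥ b (ln(1/t))^{-1} for all t ∈ (0, δ). Then limsup_{r → 0+} r ∫_r^2 (ω(t)/t²) exp( C* ∫_t^2 (ω(s)/s) ds ) dt = +∞. -/
/-!
Write `L t = -log t`, `β = C* b > 1` and `D = L (δ/2)`. On `(0, δ/2]` the hypothesis gives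
`ω s / s ≥ b / (s L s)`, whose primitive is `-b log (L s)`, so `∫_t^2 ω(s)/s ds ≥ b log (L t / D)`
and the integrand is at least `b D^(-β) L(t)^(β-1) / t²`. Integrating this over `[r, 2r]` alone
gives `r ∫_r^2 … ≥ (b D^(-β) / 4) L(2r)^(β-1)`, which tends to `∞` as `r → 0⁺` because `β > 1`.
-/

open Real Filter MeasureTheory intervalIntegral Set Topology

lemma Real.neg_log_pos {x : ℝ} (hx0 : 0 < x) (hx1 : x < 1) : 0 < -log x :=
  neg_pos.2 (log_neg hx0 hx1)

lemma integral_inv_neg_log_div_self {t c : ℝ} (ht : 0 < t) (htc : t ≤ c) (hc : c < 1) :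
    ∫ s in t..c, (-log s)⁻¹ / s = log (-log t) - log (-log c) := by
  have hIcc : ∀ s ∈ uIcc t c, 0 < s ∧ 0 < -log s := by
    intro s hs
    rw [uIcc_of_le htc] at hs
    have hs0 : 0 < s := ht.trans_le hs.1
    exact ⟨hs0, neg_log_pos hs0 (hs.2.trans_lt hc)⟩
  have hderiv : ∀ s ∈ uIcc t c,
      HasDerivAt (fun u => -log (-log u)) ((-log s)⁻¹ / s) s := by
    intro s hs
    obtain ⟨hs0, hL⟩ := hIcc s hs
    have h : HasDerivAt (fun u => -log (-log u)) (-(-s⁻¹ / -log s)) s :=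
      ((hasDerivAt_log hs0.ne').neg.log hL.ne').neg
    exact h.congr_deriv (by field_simp)
  have hcont : ContinuousOn (fun s => (-log s)⁻¹ / s) (uIcc t c) := by
    refine ContinuousOn.div (ContinuousOn.inv₀ ?_ fun s hs => (hIcc s hs).2.ne') continuousOn_id
      fun s hs => (hIcc s hs).1.ne'
    exact (continuousOn_log.mono fun s hs => (hIcc s hs).1.ne').neg
  rw [integral_eq_sub_of_hasDerivAt hderiv hcont.intervalIntegrable]
  ring

lemma mul_sub_log_neg_log_le_integral {f : ℝ → ℝ} {b t c : ℝ} (ht : 0 < t) (htc : t ≤ c)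
    (hc : c < 1) (hf : ∀ s ∈ Icc t c, b * (-log s)⁻¹ ≤ f s)
    (hfi : IntervalIntegrable (fun s => f s / s) volume t c) :
    b * (log (-log t) - log (-log c)) ≤ ∫ s in t..c, f s / s := by
  have hpos : ∀ s ∈ Icc t c, 0 < s := fun s hs => ht.trans_le hs.1
  have hlow : IntervalIntegrable (fun s => b * ((-log s)⁻¹ / s)) volume t c := by
    refine (ContinuousOn.intervalIntegrable ?_).const_mul b
    rw [uIcc_of_le htc]
    refine ContinuousOn.div (ContinuousOn.inv₀ ?_ fun s hs => ?_) continuousOn_id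
      fun s hs => (hpos s hs).ne'
    · exact (continuousOn_log.mono fun s hs => (hpos s hs).ne').neg
    · exact (neg_log_pos (hpos s hs) (hs.2.trans_lt hc)).ne'
  rw [← integral_inv_neg_log_div_self ht htc hc, ← intervalIntegral.integral_const_mul]
  refine integral_mono_on htc hlow hfi fun s hs => ?_
  rw [← mul_div_assoc]
  exact div_le_div_of_nonneg_right (hf s hs) (hpos s hs).le

lemma IntervalIntegrable.div_id {f : ℝ → ℝ} {a b : ℝ} (hf : IntervalIntegrable f volume a b)
    (h0 : (0 : ℝ) ∉ uIcc a b) : IntervalIntegrable (fun s => f s / s) volume a b := by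
  simp_rw [div_eq_mul_inv]
  exact hf.mul_continuousOn (continuousOn_inv₀.mono fun s hs => ne_of_mem_of_not_mem hs h0)

lemma intervalIntegrable_integrand {ω : ℝ → ℝ} {C a : ℝ} (ha : 0 < a)
    (hω : IntervalIntegrable ω volume a 2) :
    IntervalIntegrable (fun t => ω t / t ^ 2 * exp (C * ∫ s in t..2, ω s / s)) volume a 2 := by
  have h0 : (0 : ℝ) ∉ uIcc a 2 := notMem_uIcc_of_lt ha two_pos
  have hI : ContinuousOn (fun t => ∫ s in t..2, ω s / s) (uIcc a 2) :=
    continuousOn_primitive_interval_left ((intervalIntegrable_iff').1 (hω.div_id h0))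
  have hcont : ContinuousOn (fun t => (t ^ 2)⁻¹ * exp (C * ∫ s in t..2, ω s / s)) (uIcc a 2) :=
    ((continuousOn_pow 2).inv₀ fun t ht => pow_ne_zero 2 (ne_of_mem_of_not_mem ht h0)).mul
      (continuous_exp.comp_continuousOn (hI.const_mul C))
  simpa only [div_eq_mul_inv, mul_assoc] using hω.mul_continuousOn hcont

section LowerBound

variable {ω : ℝ → ℝ} {C b c t : ℝ}

lemma div_rpow_le_exp_integral (hC : 0 ≤ C) (ht : 0 < t) (htc : t ≤ c) (hc : c < 1)
    (hnonneg : ∀ s ∈ Ioc 0 2, 0 ≤ ω s) (hbig : ∀ s ∈ Icc t c, b * (-log s)⁻¹ ≤ ω s)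
    (hω : IntervalIntegrable (fun s => ω s / s) volume t 2) :
    (-log t / -log c) ^ (C * b) ≤ exp (C * ∫ s in t..2, ω s / s) := by
  have hLt : 0 < -log t := neg_log_pos ht (htc.trans_lt hc)
  have hLc : 0 < -log c := neg_log_pos (ht.trans_le htc) hc
  have hc2 : c ≤ 2 := by linarith
  have hinner : ∫ s in t..c, ω s / s ≤ ∫ s in t..2, ω s / s := by
    refine integral_mono_interval le_rfl htc hc2 ?_ hω
    filter_upwards [ae_restrict_mem measurableSet_Ioc] with s hs
    exact div_nonneg (hnonneg s ⟨ht.trans hs.1, hs.2⟩) (ht.trans hs.1).le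
  have hlow := mul_sub_log_neg_log_le_integral ht htc hc hbig
    (hω.mono_set (by simp only [uIcc_of_le, htc, htc.trans hc2, Icc_subset_Icc_right hc2]))
  rw [rpow_def_of_pos (div_pos hLt hLc), log_div hLt.ne' hLc.ne', exp_le_exp]
  calc (log (-log t) - log (-log c)) * (C * b) = C * (b * (log (-log t) - log (-log c))) := by
        ring
    _ ≤ C * ∫ s in t..2, ω s / s := mul_le_mul_of_nonneg_left (hlow.trans hinner) hC

lemma mul_rpow_div_sq_le_integrand (hC : 0 ≤ C) (ht : 0 < t) (htc : t ≤ c) (hc : c < 1)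
    (hnonneg : ∀ s ∈ Ioc 0 2, 0 ≤ ω s) (hbig : ∀ s ∈ Icc t c, b * (-log s)⁻¹ ≤ ω s)
    (hω : IntervalIntegrable (fun s => ω s / s) volume t 2) :
    b / (-log c) ^ (C * b) * (-log t) ^ (C * b - 1) / t ^ 2 ≤
      ω t / t ^ 2 * exp (C * ∫ s in t..2, ω s / s) := by
  have hLt : 0 < -log t := neg_log_pos ht (htc.trans_lt hc)
  have hLc : 0 < -log c := neg_log_pos (ht.trans_le htc) hc
  calc b / (-log c) ^ (C * b) * (-log t) ^ (C * b - 1) / t ^ 2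
        = b * (-log t)⁻¹ / t ^ 2 * (-log t / -log c) ^ (C * b) := by
          rw [div_rpow hLt.le hLc.le, rpow_sub_one hLt.ne']
          field_simp
    _ ≤ ω t / t ^ 2 * exp (C * ∫ s in t..2, ω s / s) := by
          refine mul_le_mul ?_ (div_rpow_le_exp_integral hC ht htc hc hnonneg hbig hω)
            (by positivity) (div_nonneg (hnonneg t ⟨ht, by linarith⟩) (by positivity))
          exact div_le_div_of_nonneg_right (hbig t ⟨le_rfl, htc⟩) (by positivity)

end LowerBound

lemma mul_le_integral_of_le_on_Icc {f : ℝ → ℝ} {r T K : ℝ} (hr : 0 ≤ r) (hrT : 2 * r ≤ T)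
    (hf : IntervalIntegrable f volume r T) (hnonneg : ∀ t ∈ Ioc r T, 0 ≤ f t)
    (hK : ∀ t ∈ Icc r (2 * r), K ≤ f t) : r * K ≤ ∫ t in r..T, f t := by
  have h2r : r ≤ 2 * r := by linarith
  calc r * K = ∫ _ in r..2 * r, K := by
        simp only [intervalIntegral.integral_const, smul_eq_mul]; ring
    _ ≤ ∫ t in r..2 * r, f t :=
        integral_mono_on h2r intervalIntegrable_const
          (hf.mono_set (by simp only [uIcc_of_le, h2r, h2r.trans hrT, Icc_subset_Icc_right hrT]))
          hK
    _ ≤ ∫ t in r..T, f t :=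
        integral_mono_interval le_rfl h2r hrT
          ((ae_restrict_mem measurableSet_Ioc).mono hnonneg) hf

lemma mul_neg_log_rpow_le_mul_integral {ω : ℝ → ℝ} {C b c r : ℝ} (hC : 0 ≤ C)
    (hβ : 1 ≤ C * b) (hr : 0 < r) (hrc : 2 * r ≤ c) (hc : c < 1)
    (hnonneg : ∀ t ∈ Ioc 0 2, 0 ≤ ω t) (hbig : ∀ t ∈ Ioc 0 c, b * (-log t)⁻¹ ≤ ω t)
    (hω : ∀ a ∈ Ioc 0 2, IntervalIntegrable ω volume a 2) :
    b / (-log c) ^ (C * b) / 4 * (-log (2 * r)) ^ (C * b - 1) ≤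
      r * ∫ t in r..2, ω t / t ^ 2 * exp (C * ∫ s in t..2, ω s / s) := by
  set K := b / (-log c) ^ (C * b) * (-log (2 * r)) ^ (C * b - 1) / (2 * r) ^ 2 with hK_def
  have hb : 0 ≤ b := by nlinarith
  have hK : ∀ t ∈ Icc r (2 * r), K ≤ ω t / t ^ 2 * exp (C * ∫ s in t..2, ω s / s) := by
    intro t ht
    have ht0 : 0 < t := hr.trans_le ht.1
    have htc : t ≤ c := ht.2.trans hrc
    refine le_trans ?_ (mul_rpow_div_sq_le_integrand hC ht0 htc hc hnonneg
      (fun s hs => hbig s ⟨ht0.trans_le hs.1, hs.2⟩)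
      ((hω t ⟨ht0, by linarith⟩).div_id (notMem_uIcc_of_lt ht0 two_pos)))
    have hL : 0 < -log (2 * r) := neg_log_pos (by positivity) (by linarith)
    have hLt : 0 < -log t := hL.trans_le (by gcongr; exact ht.2)
    have hcoef : 0 ≤ b / (-log c) ^ (C * b) :=
      div_nonneg hb (rpow_nonneg (neg_log_pos (by linarith) hc).le _)
    rw [hK_def]
    gcongr <;> exact ht.2
  have hnonneg' : ∀ t ∈ Ioc r 2, 0 ≤ ω t / t ^ 2 * exp (C * ∫ s in t..2, ω s / s) :=
    fun t ht => mul_nonneg (div_nonneg (hnonneg t ⟨hr.trans ht.1, ht.2⟩) (sq_nonneg t))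
      (exp_pos _).le
  calc b / (-log c) ^ (C * b) / 4 * (-log (2 * r)) ^ (C * b - 1) = r * (r * K) := by
        rw [hK_def]; field_simp; ring
    _ ≤ _ := mul_le_mul_of_nonneg_left (mul_le_integral_of_le_on_Icc hr.le (by linarith)
        (intervalIntegrable_integrand hr (hω r ⟨hr, by linarith⟩)) hnonneg' hK) hr.le

lemma tendsto_mul_neg_log_two_mul_rpow_atTop {c p : ℝ} (hc : 0 < c) (hp : 0 < p) :
    Tendsto (fun r => c * (-log (2 * r)) ^ p) (𝓝[>] 0) atTop := by
  have h2 : Tendsto (fun r : ℝ => 2 * r) (𝓝[>] 0) (𝓝[>] 0) := by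
    simpa only [mul_zero, id] using
      TendstoNhdsWithinIoi.const_mul two_pos (tendsto_id (x := 𝓝[>] (0 : ℝ)))
  exact ((tendsto_rpow_atTop hp).comp
    (tendsto_neg_atBot_atTop.comp (tendsto_log_nhdsGT_zero.comp h2))).const_mul_atTop hc

lemma EReal.limsup_coe_eq_top_of_tendsto_atTop {α : Type*} {l : Filter α} [l.NeBot]
    {f : α → ℝ} (hf : Tendsto f l atTop) : limsup (fun x => (f x : EReal)) l = ⊤ :=
  (EReal.tendsto_coe_atTop.comp hf).limsup_eq

theorem limsup_X_eq_top (ω : ℝ → ℝ) (Cstar b δ : ℝ)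
    (hmeas : Measurable ω)
    (hnonneg : ∀ t ∈ Set.Ioc (0 : ℝ) 2, 0 ≤ ω t)
    (hbdd : ∃ M : ℝ, ∀ t ∈ Set.Ioc (0 : ℝ) 2, ω t ≤ M)
    (hCstar : 0 < Cstar) (hb : 1 / Cstar < b) (hδ0 : 0 < δ) (hδ1 : δ < 1)
    (hbig : ∀ t ∈ Set.Ioo (0 : ℝ) δ, b * (Real.log (1 / t))⁻¹ ≤ ω t) :
    Filter.limsup
      (fun r : ℝ => ((r * ∫ t in r..2,
        (ω t / t ^ 2) * Real.exp (Cstar * ∫ s in t..2, ω s / s) : ℝ) : EReal))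
      (nhdsWithin 0 (Set.Ioi 0)) = ⊤ := by
  obtain ⟨M, hM⟩ := hbdd
  have hβ : 1 < Cstar * b := by rwa [div_lt_iff₀ hCstar, mul_comm] at hb
  have hb0 : 0 < b := by nlinarith
  have hω : ∀ a ∈ Ioc 0 2, IntervalIntegrable ω volume a 2 := fun a ha =>
    (intervalIntegrable_iff_integrableOn_Ioc_of_le ha.2).2 <|
      Measure.integrableOn_of_bounded measure_Ioc_lt_top.ne hmeas.aestronglyMeasurable
        (M := M) <| (ae_restrict_mem measurableSet_Ioc).mono fun t ht => by
          have ht' : t ∈ Ioc 0 2 := ⟨ha.1.trans ht.1, ht.2⟩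
          rw [norm_of_nonneg (hnonneg t ht')]
          exact hM t ht'
  have hbig' : ∀ t ∈ Ioc 0 (δ / 2), b * (-log t)⁻¹ ≤ ω t := fun t ht => by
    simpa only [one_div, log_inv] using hbig t ⟨ht.1, by linarith [ht.2]⟩
  refine EReal.limsup_coe_eq_top_of_tendsto_atTop <| tendsto_atTop_mono' _ ?_ <|
    tendsto_mul_neg_log_two_mul_rpow_atTop (c := b / (-log (δ / 2)) ^ (Cstar * b) / 4)
      (p := Cstar * b - 1)
      (by have := neg_log_pos (half_pos hδ0) (by linarith); positivity) (by linarith)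
  filter_upwards [Ioo_mem_nhdsGT (by positivity : 0 < δ / 4)] with r hr
  exact mul_neg_log_rpow_le_mul_integral hCstar.le hβ.le hr.1 (by linarith [hr.2])
    (by linarith) hnonneg hbig' hω
end

section
/- Let ℓ(x) = ln ln ln (64/|x|) for x ∈ B₂ \ {0} ⊂ ℝⁿ. Then there exist constants c, C > 0 (depending on n) such that for all sufficiently small r > 0, the L² mean oscillation ω_{ℓ,2}(r) = sup_{x ∈ B₂} ( |B_r(x)|^{-1} ∫_{B_r(x)} |ℓ(y) − (ℓ)_{B_r(x)}|² dy )^{1/2} satisfies ω_{ℓ,2}(r) ≤ C / ( ln(64/r) · ln ln(64/r) ). -/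
/-!
Write `ℓ(y) = log log log (64/‖y‖)` and `P(t) = log (64/t) · log log (64/t)`. Fix `‖x‖ < 2`,
`r < 1` and put `ρ = ‖x‖ + r ≤ 3`, so that `B_r(x) ⊆ B_ρ(0)`. The mean of `|ℓ - c|²` over a ball
is smallest when `c` is the mean of `ℓ`, so it suffices to compare `ℓ` with `c = ℓ(ρ)`.
Concavity of `log log` gives `0 ≤ ℓ(y) - ℓ(ρ) ≤ log (ρ/‖y‖) / P(ρ)`, and as `t ↦ t P(t)` increases
on `(0, 3]` this is at most `G(y) / P(r)` with `G(y) = (ρ/r) log (ρ/‖y‖)`. It remains to bound the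
mean of `G²` over `B_r(x)` by a constant. If `‖x‖ > 2r` then `0 ≤ G ≤ 6` there. Otherwise `ρ ≤ 3r`,
and by scaling `∫_{B_r(x)} G² ≤ 9 ∫_{B_ρ(0)} log² (‖y‖/ρ) dy = 9 ρⁿ ∫_{B_1(0)} log² ‖z‖ dz`,
which is finite because `log² ‖z‖ ≤ 16 ‖z‖^(-1/2)` on the unit ball.
-/

open Real MeasureTheory Metric

/-- The `L²` mean oscillation of a scalar function `f` at scale `r`,
with centers in the ball of radius 2. -/
noncomputable def meanOsc2 {n : ℕ} (f : EuclideanSpace ℝ (Fin n) → ℝ) (r : ℝ) : ℝ :=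
  ⨆ x : (ball (0 : EuclideanSpace ℝ (Fin n)) 2),
    ((volume (ball (x : EuclideanSpace ℝ (Fin n)) r)).toReal⁻¹ *
      ∫ y in ball (x : EuclideanSpace ℝ (Fin n)) r,
        |f y - (volume (ball (x : EuclideanSpace ℝ (Fin n)) r)).toReal⁻¹ *
          ∫ z in ball (x : EuclideanSpace ℝ (Fin n)) r, f z| ^ (2 : ℝ)) ^ ((1 : ℝ) / 2)

lemma log_add_le_log_add_div {b d : ℝ} (hb : 0 < b) (hbd : 0 < b + d) :
    log (b + d) ≤ log b + d / b := by
  have h := log_le_sub_one_of_pos (div_pos hbd hb)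
  rw [log_div hbd.ne' hb.ne', add_div, div_self hb.ne'] at h
  linarith

lemma log_log_add_le {L u : ℝ} (hL : 1 < L) (hu : 0 ≤ u) :
    log (log (L + u)) ≤ log (log L) + u / (L * log L) := by
  have hlogL : 0 < log L := log_pos hL
  calc log (log (L + u)) ≤ log (log L + u / L) :=
        log_le_log (log_pos (by linarith)) (log_add_le_log_add_div (by linarith) (by linarith))
    _ ≤ log (log L) + u / L / log L := log_add_le_log_add_div hlogL (by positivity)
    _ = log (log L) + u / (L * log L) := by rw [div_div]

lemma add_mul_log_add_le {L w : ℝ} (hL : exp 1 ≤ L) (hw : 0 ≤ w) :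
    (L + w) * log (L + w) ≤ exp w * (L * log L) := by
  have hL2 : 2 ≤ L := by linarith [add_one_le_exp 1]
  have hlogL : 1 ≤ log L := (le_log_iff_exp_le (by linarith)).2 hL
  have hlen : L + w ≤ L * exp (w / L) := by
    have := add_one_le_exp (w / L)
    calc L + w = L * (w / L + 1) := by field_simp; ring
      _ ≤ L * exp (w / L) := by gcongr
  have hlog : log (L + w) ≤ log L * exp (w / (L * log L)) := by
    have := add_one_le_exp (w / (L * log L))
    calc log (L + w) ≤ log L + w / L := log_add_le_log_add_div (by linarith) (by linarith)
      _ = log L * (w / (L * log L) + 1) := by field_simp; ring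
      _ ≤ log L * exp (w / (L * log L)) := by gcongr
  have hexp : w / L + w / (L * log L) ≤ w := by
    have h1 : w / L ≤ w / 2 := by gcongr
    have h2 : w / (L * log L) ≤ w / 2 := by gcongr; nlinarith
    linarith
  calc (L + w) * log (L + w) ≤ (L * exp (w / L)) * (log L * exp (w / (L * log L))) := by
        gcongr
        exact log_nonneg (by linarith)
    _ = exp (w / L + w / (L * log L)) * (L * log L) := by rw [exp_add]; ring
    _ ≤ exp w * (L * log L) := by gcongr

noncomputable def tripleLog (t : ℝ) : ℝ := log (log (log (64 / t)))

noncomputable def logMulLogLog (t : ℝ) : ℝ := log (64 / t) * log (log (64 / t))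

lemma measurable_tripleLog : Measurable tripleLog := by
  unfold tripleLog; fun_prop

lemma exp_one_le_log_64_div {t : ℝ} (ht : 0 < t) (ht3 : t ≤ 3) : exp 1 ≤ log (64 / t) := by
  rw [le_log_iff_exp_le (by positivity)]
  have he := exp_one_lt_d9
  have h3 : exp 3 = exp 1 ^ 3 := by rw [← exp_nat_mul]; norm_num
  calc exp (exp 1) ≤ exp 3 := exp_le_exp.2 (by linarith)
    _ ≤ 2.7182818286 ^ 3 := by rw [h3]; gcongr
    _ ≤ 64 / 3 := by norm_num
    _ ≤ 64 / t := by gcongr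

lemma logMulLogLog_pos {t : ℝ} (ht : 0 < t) (ht3 : t ≤ 3) : 0 < logMulLogLog t := by
  have h := exp_one_le_log_64_div ht ht3
  have h1 : 1 < log (64 / t) := by linarith [add_one_le_exp 1]
  exact mul_pos (by linarith) (log_pos h1)

lemma log_64_div_eq_add {t ρ : ℝ} (ht : 0 < t) (hρ : 0 < ρ) :
    log (64 / t) = log (64 / ρ) + log (ρ / t) := by
  rw [log_div (by norm_num) ht.ne', log_div (by norm_num) hρ.ne', log_div hρ.ne' ht.ne']
  ring

lemma mul_logMulLogLog_le {s t : ℝ} (hs : 0 < s) (hst : s ≤ t) (ht : t ≤ 3) :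
    s * logMulLogLog s ≤ t * logMulLogLog t := by
  have hw : 0 ≤ log (t / s) := log_nonneg ((one_le_div hs).2 hst)
  have h := add_mul_log_add_le (exp_one_le_log_64_div (hs.trans_le hst) ht) hw
  rw [← log_64_div_eq_add hs (hs.trans_le hst), exp_log (div_pos (hs.trans_le hst) hs)] at h
  calc s * logMulLogLog s ≤ s * (t / s * logMulLogLog t) := by
        unfold logMulLogLog; gcongr
    _ = t * logMulLogLog t := by field_simp

lemma tripleLog_le_tripleLog {t ρ : ℝ} (ht : 0 < t) (htρ : t ≤ ρ) (hρ : ρ ≤ 3) :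
    tripleLog ρ ≤ tripleLog t := by
  have hρ0 : 0 < ρ := ht.trans_le htρ
  have hL := exp_one_le_log_64_div hρ0 hρ
  have hL1 : 1 < log (64 / ρ) := by linarith [add_one_le_exp 1]
  have hLt : log (64 / ρ) ≤ log (64 / t) := log_le_log (by positivity) (by gcongr)
  unfold tripleLog
  gcongr
  exact log_pos hL1

lemma tripleLog_sub_le {t ρ : ℝ} (ht : 0 < t) (htρ : t ≤ ρ) (hρ : ρ ≤ 3) :
    tripleLog t - tripleLog ρ ≤ log (ρ / t) / logMulLogLog ρ := by
  have hL := exp_one_le_log_64_div (ht.trans_le htρ) hρ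
  have h := log_log_add_le (by linarith [add_one_le_exp 1]) (log_nonneg ((one_le_div ht).2 htρ))
  rw [← log_64_div_eq_add ht (ht.trans_le htρ)] at h
  unfold tripleLog logMulLogLog
  linarith

lemma abs_tripleLog_sub_le {r t ρ : ℝ} (hr : 0 < r) (ht : 0 < t) (hrρ : r ≤ ρ) (htρ : t ≤ ρ)
    (hρ : ρ ≤ 3) : |tripleLog t - tripleLog ρ| ≤ ρ / r * log (ρ / t) / logMulLogLog r := by
  have hPr := logMulLogLog_pos hr (hrρ.trans hρ)
  have hPρ := logMulLogLog_pos (ht.trans_le htρ) hρ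
  have hscale : 1 / logMulLogLog ρ ≤ ρ / r / logMulLogLog r := by
    rw [div_div, div_le_div_iff₀ hPρ (mul_pos hr hPr)]
    linarith [mul_logMulLogLog_le hr hrρ hρ]
  rw [abs_of_nonneg (sub_nonneg.2 (tripleLog_le_tripleLog ht htρ hρ))]
  calc tripleLog t - tripleLog ρ ≤ log (ρ / t) * (1 / logMulLogLog ρ) := by
        rw [mul_one_div]; exact tripleLog_sub_le ht htρ hρ
    _ ≤ log (ρ / t) * (ρ / r / logMulLogLog r) := by
        gcongr
        exact log_nonneg ((one_le_div ht).2 htρ)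
    _ = ρ / r * log (ρ / t) / logMulLogLog r := by ring

lemma average_sq_sub_average_le {α : Type*} [MeasurableSpace α] (μ : Measure α)
    [IsFiniteMeasure μ] {f : α → ℝ} (hf : AEStronglyMeasurable f μ) (c : ℝ) :
    ⨍ x, (f x - ⨍ y, f y ∂μ) ^ 2 ∂μ ≤ ⨍ x, (f x - c) ^ 2 ∂μ := by
  rcases eq_zero_or_neZero μ with rfl | _
  · simp
  have hf' : AEStronglyMeasurable f ((μ Set.univ)⁻¹ • μ) := hf.smul_measure _
  simp only [average_eq']
  rw [← ProbabilityTheory.variance_eq_integral hf'.aemeasurable,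
    ← ProbabilityTheory.variance_sub_const hf' c]
  exact ProbabilityTheory.variance_le_expectation_sq (hf'.sub aestronglyMeasurable_const)

lemma sq_log_le_rpow {x : ℝ} (hx0 : 0 ≤ x) (hx1 : x ≤ 1) :
    log x ^ 2 ≤ 16 * x ^ (-(1 / 2 : ℝ)) := by
  rcases hx0.eq_or_lt with rfl | hx
  · simp
  have hinv : 0 ≤ log x⁻¹ := log_nonneg (one_le_inv₀ hx |>.2 hx1)
  have h := log_le_rpow_div (inv_nonneg.2 hx.le) (by norm_num : (0:ℝ) < 1 / 4)
  calc log x ^ 2 = log x⁻¹ ^ 2 := by rw [log_inv, neg_sq]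
    _ ≤ (x⁻¹ ^ (1 / 4 : ℝ) / (1 / 4)) ^ 2 := by gcongr
    _ = 16 * x ^ (-(1 / 2 : ℝ)) := by
      rw [div_pow, ← rpow_natCast, ← rpow_mul (by positivity), inv_rpow hx.le, ← rpow_neg hx.le]
      norm_num
      ring

lemma sq_div_mul_log_div_le {a r t : ℝ} (hr : 0 < r) (ha : 2 * r ≤ a) (ht : |t - a| < r) :
    ((a + r) / r * log ((a + r) / t)) ^ 2 ≤ 36 := by
  obtain ⟨ht₁, ht₂⟩ := abs_sub_lt_iff.1 ht
  have ht0 : 0 < t := by linarith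
  have har : 0 < (a + r) / r := div_pos (by linarith) hr
  have hlog : log ((a + r) / t) ≤ 2 * r / (a - r) :=
    calc log ((a + r) / t) ≤ (a + r) / t - 1 := log_le_sub_one_of_pos (div_pos (by linarith) ht0)
      _ = (a + r - t) / t := by field_simp
      _ ≤ 2 * r / (a - r) := by rw [div_le_div_iff₀ ht0 (by linarith)]; nlinarith
  have h0 : 0 ≤ (a + r) / r * log ((a + r) / t) :=
    mul_nonneg har.le (log_nonneg ((one_le_div ht0).2 (by linarith)))
  have h6 : (a + r) / r * log ((a + r) / t) ≤ 6 :=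
    calc (a + r) / r * log ((a + r) / t) ≤ (a + r) / r * (2 * r / (a - r)) := by gcongr
      _ ≤ 6 := by rw [div_mul_div_comm, div_le_iff₀ (by nlinarith)]; nlinarith
  nlinarith

section Majorant

variable {E : Type*} [SeminormedAddCommGroup E]

/-- On `ball x r` this dominates `logMulLogLog r * |tripleLog ‖y‖ - tripleLog (‖x‖ + r)|`. -/
noncomputable def ballMajorant (x : E) (r : ℝ) (y : E) : ℝ :=
  (‖x‖ + r) / r * log ((‖x‖ + r) / ‖y‖)

lemma ballMajorant_sq (x : E) (r : ℝ) (y : E) :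
    ballMajorant x r y ^ 2 = ((‖x‖ + r) / r) ^ 2 * log (‖y‖ / (‖x‖ + r)) ^ 2 := by
  have h : log ((‖x‖ + r) / ‖y‖) = -log (‖y‖ / (‖x‖ + r)) := by rw [← log_inv, inv_div]
  rw [ballMajorant, mul_pow, h, neg_sq]

lemma ball_subset_ball_zero_norm_add (x : E) (r : ℝ) : ball x r ⊆ ball (0 : E) (‖x‖ + r) :=
  ball_subset_ball' (by rw [dist_zero_right, add_comm])

end Majorant

section HaarMeasure

variable {E : Type*} [NormedAddCommGroup E] [NormedSpace ℝ E] [FiniteDimensional ℝ E]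
  [MeasurableSpace E] [BorelSpace E] (μ : Measure E) [μ.IsAddHaarMeasure]

open Module

lemma integrableOn_sq_log_norm_div (hd : 1 ≤ finrank ℝ E) {ρ : ℝ} (hρ : 0 < ρ) :
    IntegrableOn (fun y : E => log (‖y‖ / ρ) ^ 2) (ball 0 ρ) μ := by
  have hα : (1 / 2 : ℝ) < finrank ℝ E := by
    have : (1 : ℝ) ≤ finrank ℝ E := by exact_mod_cast hd
    linarith
  refine integrableOn_ball_of_norm_le_rpow hd (C := 16 / ρ ^ (-(1 / 2 : ℝ))) hα ?_
    ((measurable_norm.div_const ρ).log.pow_const 2).aestronglyMeasurable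
  filter_upwards [ae_restrict_mem measurableSet_ball] with y hy
  rw [mem_ball_zero_iff] at hy
  rw [norm_of_nonneg (sq_nonneg _), div_mul_eq_mul_div, mul_div_assoc,
    ← div_rpow (norm_nonneg _) hρ.le]
  exact sq_log_le_rpow (by positivity) ((div_le_one hρ).2 hy.le)

lemma setIntegral_sq_log_norm_div {ρ : ℝ} (hρ : 0 < ρ) :
    ∫ y in ball (0 : E) ρ, log (‖y‖ / ρ) ^ 2 ∂μ =
      ρ ^ finrank ℝ E * ∫ z in ball (0 : E) 1, log ‖z‖ ^ 2 ∂μ := by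
  have h := Measure.setIntegral_comp_smul_of_pos μ (fun z : E => log ‖z‖ ^ 2) (ball 0 ρ)
    (inv_pos.2 hρ)
  rw [_root_.smul_ball (inv_ne_zero hρ.ne'), smul_zero, norm_inv, norm_of_nonneg hρ.le,
    inv_mul_cancel₀ hρ.ne', inv_pow, inv_inv, smul_eq_mul] at h
  simpa [norm_smul, abs_of_pos hρ, inv_mul_eq_div] using h

variable {μ}

lemma integrableOn_ballMajorant_sq (hd : 1 ≤ finrank ℝ E) (x : E) {r : ℝ} (hr : 0 < r) :
    IntegrableOn (fun y => ballMajorant x r y ^ 2) (ball x r) μ := by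
  simp_rw [ballMajorant_sq]
  exact IntegrableOn.mono_set ((integrableOn_sq_log_norm_div μ hd (by positivity)).const_mul _)
    (ball_subset_ball_zero_norm_add x r)

lemma setIntegral_ballMajorant_sq_le_of_norm_le (hd : 1 ≤ finrank ℝ E) {x : E} {r : ℝ}
    (hr : 0 < r) (hx : ‖x‖ ≤ 2 * r) :
    ∫ y in ball x r, ballMajorant x r y ^ 2 ∂μ ≤
      9 * 3 ^ finrank ℝ E * (∫ z in ball (0 : E) 1, log ‖z‖ ^ 2 ∂μ) *
        r ^ finrank ℝ E := by
  set ρ := ‖x‖ + r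
  have hρ : 0 < ρ := by positivity
  simp_rw [ballMajorant_sq]
  calc ∫ y in ball x r, (ρ / r) ^ 2 * log (‖y‖ / ρ) ^ 2 ∂μ
      ≤ ∫ y in ball 0 ρ, (ρ / r) ^ 2 * log (‖y‖ / ρ) ^ 2 ∂μ :=
        setIntegral_mono_set ((integrableOn_sq_log_norm_div μ hd hρ).const_mul _)
          (.of_forall fun _ => by positivity) (ball_subset_ball_zero_norm_add x r).eventuallyLE
    _ = (ρ / r) ^ 2 * ρ ^ finrank ℝ E * ∫ z in ball (0 : E) 1, log ‖z‖ ^ 2 ∂μ := by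
        rw [integral_const_mul, setIntegral_sq_log_norm_div μ hρ, mul_assoc]
    _ ≤ 3 ^ 2 * (3 * r) ^ finrank ℝ E * ∫ z in ball (0 : E) 1, log ‖z‖ ^ 2 ∂μ := by
        have : ρ / r ≤ 3 := (div_le_iff₀ hr).2 (by linarith)
        gcongr
        linarith
    _ = _ := by rw [mul_pow]; ring

lemma exists_setIntegral_ballMajorant_sq_le (hd : 1 ≤ finrank ℝ E) :
    ∃ K, 0 < K ∧ ∀ (x : E) (r : ℝ), 0 < r →
      ∫ y in ball x r, ballMajorant x r y ^ 2 ∂μ ≤ K * μ.real (ball x r) := by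
  have : Nontrivial E := Module.nontrivial_of_finrank_pos (R := ℝ) (by omega)
  set K₁ := ∫ z in ball (0 : E) 1, log ‖z‖ ^ 2 ∂μ
  set v := μ.real (ball (0 : E) 1)
  have hv : 0 < v := ENNReal.toReal_pos (measure_ball_pos μ 0 one_pos).ne' measure_ball_lt_top.ne
  have hK₁ : 0 ≤ K₁ := setIntegral_nonneg measurableSet_ball fun _ _ => sq_nonneg _
  refine ⟨36 + 9 * 3 ^ finrank ℝ E * K₁ / v, by positivity, fun x r hr => ?_⟩
  have hvol : μ.real (ball x r) = r ^ finrank ℝ E * v := by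
    rw [measureReal_def, Measure.addHaar_ball_of_pos μ x hr, ENNReal.toReal_mul,
      ENNReal.toReal_ofReal (by positivity)]
    rfl
  rcases le_or_gt ‖x‖ (2 * r) with hx | hx
  · calc ∫ y in ball x r, ballMajorant x r y ^ 2 ∂μ
        ≤ 9 * 3 ^ finrank ℝ E * K₁ * r ^ finrank ℝ E :=
          setIntegral_ballMajorant_sq_le_of_norm_le hd hr hx
      _ = 9 * 3 ^ finrank ℝ E * K₁ / v * μ.real (ball x r) := by
          rw [hvol]; field_simp
      _ ≤ _ := by gcongr; linarith
  · calc ∫ y in ball x r, ballMajorant x r y ^ 2 ∂μ ≤ ∫ _ in ball x r, (36 : ℝ) ∂μ := by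
          refine setIntegral_mono_on (integrableOn_ballMajorant_sq hd x hr)
            (integrableOn_const measure_ball_lt_top.ne) measurableSet_ball fun y hy => ?_
          refine sq_div_mul_log_div_le hr hx.le ?_
          rw [mem_ball, dist_eq_norm] at hy
          exact (abs_norm_sub_norm_le y x).trans_lt hy
      _ = 36 * μ.real (ball x r) := by rw [setIntegral_const, smul_eq_mul, mul_comm]
      _ ≤ _ := by gcongr; linarith [show 0 ≤ 9 * 3 ^ finrank ℝ E * K₁ / v by positivity]

lemma setAverage_sq_sub_setAverage_tripleLog_le (hd : 1 ≤ finrank ℝ E) {x : E} {r K : ℝ}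
    (hr : 0 < r) (hxr : ‖x‖ + r ≤ 3)
    (hK : ∫ y in ball x r, ballMajorant x r y ^ 2 ∂μ ≤ K * μ.real (ball x r)) :
    ⨍ y in ball x r, (tripleLog ‖y‖ - ⨍ z in ball x r, tripleLog ‖z‖ ∂μ) ^ 2 ∂μ ≤
      K / logMulLogLog r ^ 2 := by
  have : Nontrivial E := Module.nontrivial_of_finrank_pos (R := ℝ) (by omega)
  have : IsFiniteMeasure (μ.restrict (ball x r)) :=
    isFiniteMeasure_restrict.2 measure_ball_lt_top.ne
  have hdom : ∀ᵐ y ∂μ.restrict (ball x r),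
      (tripleLog ‖y‖ - tripleLog (‖x‖ + r)) ^ 2 ≤ ballMajorant x r y ^ 2 / logMulLogLog r ^ 2 := by
    -- The bound fails at `y = 0`, where the junk value `64 / 0 = 0` makes `tripleLog 0 = 0`.
    filter_upwards [ae_restrict_mem measurableSet_ball, ae_restrict_of_ae (μ.ae_ne 0)]
      with y hy hy0
    have hyρ : ‖y‖ < ‖x‖ + r := mem_ball_zero_iff.1 (ball_subset_ball_zero_norm_add x r hy)
    have h := abs_tripleLog_sub_le hr (norm_pos_iff.2 hy0) (by linarith [norm_nonneg x]) hyρ.le hxr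
    rw [← div_pow, ← sq_abs]
    gcongr
    exact h
  calc ⨍ y in ball x r, (tripleLog ‖y‖ - ⨍ z in ball x r, tripleLog ‖z‖ ∂μ) ^ 2 ∂μ
      ≤ ⨍ y in ball x r, (tripleLog ‖y‖ - tripleLog (‖x‖ + r)) ^ 2 ∂μ :=
        average_sq_sub_average_le _
          (measurable_tripleLog.comp measurable_norm).aestronglyMeasurable _
    _ ≤ (μ.real (ball x r))⁻¹ *
          ∫ y in ball x r, ballMajorant x r y ^ 2 / logMulLogLog r ^ 2 ∂μ := by
        rw [setAverage_eq, smul_eq_mul]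
        exact mul_le_mul_of_nonneg_left (integral_mono_of_nonneg (.of_forall fun _ => sq_nonneg _)
          ((integrableOn_ballMajorant_sq hd x hr).div_const _) hdom) (by positivity)
    _ ≤ K / logMulLogLog r ^ 2 := by
        rw [integral_div, ← mul_div_assoc]
        gcongr
        have hB : 0 < μ.real (ball x r) :=
          ENNReal.toReal_pos (measure_ball_pos μ x hr).ne' measure_ball_lt_top.ne
        rw [inv_mul_le_iff₀ hB, mul_comm]
        exact hK

end HaarMeasure

lemma meanOsc2_eq_iSup_sqrt_setAverage {n : ℕ} (f : EuclideanSpace ℝ (Fin n) → ℝ) (r : ℝ) :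
    meanOsc2 f r = ⨆ x : ball (0 : EuclideanSpace ℝ (Fin n)) 2,
      √(⨍ y in ball (x : EuclideanSpace ℝ (Fin n)) r,
        (f y - ⨍ z in ball (x : EuclideanSpace ℝ (Fin n)) r, f z) ^ 2) := by
  simp only [meanOsc2, setAverage_eq, smul_eq_mul, measureReal_def, sqrt_eq_rpow, rpow_two, sq_abs]

theorem meanOsc_logloglog (n : ℕ) (hn : 1 ≤ n) :
    ∃ C : ℝ, 0 < C ∧ ∃ r₀ : ℝ, 0 < r₀ ∧ ∀ r : ℝ, 0 < r → r < r₀ →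
      meanOsc2 (fun x : EuclideanSpace ℝ (Fin n) => Real.log (Real.log (Real.log (64 / ‖x‖)))) r
        ≤ C / (Real.log (64 / r) * Real.log (Real.log (64 / r))) := by
  have hd : 1 ≤ Module.finrank ℝ (EuclideanSpace ℝ (Fin n)) := by simpa using hn
  obtain ⟨K, hK, hball⟩ := exists_setIntegral_ballMajorant_sq_le (μ := volume) hd
  refine ⟨√K, sqrt_pos.2 hK, 1, one_pos, fun r hr hr1 => ?_⟩
  have hP := logMulLogLog_pos hr (by linarith)
  have : Nonempty (ball (0 : EuclideanSpace ℝ (Fin n)) 2) := ⟨⟨0, mem_ball_self two_pos⟩⟩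
  rw [meanOsc2_eq_iSup_sqrt_setAverage]
  refine ciSup_le fun x => ?_
  have hx : ‖(x : EuclideanSpace ℝ (Fin n))‖ + r ≤ 3 := by linarith [mem_ball_zero_iff.1 x.2]
  calc √(⨍ y in ball (x : EuclideanSpace ℝ (Fin n)) r,
        (tripleLog ‖y‖ - ⨍ z in ball (x : EuclideanSpace ℝ (Fin n)) r, tripleLog ‖z‖) ^ 2)
      ≤ √(K / logMulLogLog r ^ 2) :=
        sqrt_le_sqrt (setAverage_sq_sub_setAverage_tripleLog_le hd hr hx (hball x r hr))
    _ = √K / logMulLogLog r := by rw [sqrt_div' _ (by positivity), sqrt_sq hP.le]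
end

section
/- Let n ≥ 2 and define on B₄ \ {0} ⊂ ℝⁿ: a(r) = −(1 + n ln(64/r)) / ( (n−1)(ln(64/r))² ln ln(64/r) ) and v(r) = ln ln(64/r), and set u(x) = x¹ v(|x|). Then v''(r) + ((n+1)/r) v'(r) − ((n−1)/r²) a(r) v(r) = 0 for all r ∈ (0, 4], hence u satisfies ∂_α(A^{αβ} ∂_β u) = 0 on B₄ \ {0} with A^{αβ}(x) = δ^{αβ} + a(|x|)(δ^{αβ} − x^α x^β/|x|²). -/
/-!
For `u = x_k v(|x|)` the flux `∑_β A^{αβ} ∂_β u` is `δ^{αk} (1 + a) v + x_k x_α (v'/r - a v/r²)`,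
a field of the form `δ^{αk} P(|x|) + x_k x_α Q(|x|)`, whose divergence is
`x_k (P'/r + (n + 1) Q + r Q')`. Substituting `P` and `Q`, the terms containing `a'` cancel and
the divergence becomes `x_k (v'' + (n + 1) v'/r - (n - 1) a v/r²)`, so the PDE follows from the
ODE. For `v = ln ln(64/r)` and `L = ln(64/r) > 1` one has `v' = -1/(rL)` and
`v'' = (L - 1)/(rL)²`, and the ODE is then an identity of rational functions in `r` and `L`.
-/
open Real Filter Topology

section Radial

variable {E : Type*} [NormedAddCommGroup E] [InnerProductSpace ℝ E]

theorem hasFDerivAt_norm_of_ne_zero {x : E} (hx : x ≠ 0) :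
    HasFDerivAt (‖·‖) (‖x‖⁻¹ • innerSL ℝ x) x := by
  have h := (hasDerivAt_sqrt (pow_ne_zero 2 (norm_ne_zero_iff.2 hx))).comp_hasFDerivAt x
    (hasStrictFDerivAt_norm_sq x).hasFDerivAt
  simp only [Function.comp_def, sqrt_sq (norm_nonneg _)] at h
  refine h.congr_fderiv ?_
  ext w
  simp
  field_simp

theorem HasDerivAt.hasFDerivAt_comp_norm {f : ℝ → ℝ} {f' : ℝ} {x : E} (hf : HasDerivAt f f' ‖x‖)
    (hx : x ≠ 0) : HasFDerivAt (fun y => f ‖y‖) ((f' / ‖x‖) • innerSL ℝ x) x := by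
  refine (hf.comp_hasFDerivAt x (hasFDerivAt_norm_of_ne_zero hx)).congr_fderiv ?_
  rw [smul_smul, div_eq_mul_inv]

end Radial

section Euclidean

variable {ι : Type*} [Fintype ι] [DecidableEq ι]

theorem fderiv_coord_mul_radial_apply {v : ℝ → ℝ} {v' : ℝ} {x : EuclideanSpace ℝ ι} (k β : ι)
    (hv : HasDerivAt v v' ‖x‖) (hx : x ≠ 0) :
    fderiv ℝ (fun y : EuclideanSpace ℝ ι => y k * v ‖y‖) x (EuclideanSpace.single β 1) =
      (if k = β then v ‖x‖ else 0) + x k * x β * (v' / ‖x‖) := by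
  have h : HasFDerivAt (fun y : EuclideanSpace ℝ ι => y k * v ‖y‖) _ x :=
    (PiLp.hasFDerivAt_apply (𝕜 := ℝ) 2 x k).mul (hv.hasFDerivAt_comp_norm hx)
  rw [h.fderiv]
  simp [EuclideanSpace.inner_single_right, PiLp.single_apply]
  ring

theorem fderiv_radialField_apply {P Q : ℝ → ℝ} {P' Q' : ℝ} {x : EuclideanSpace ℝ ι} (k α : ι)
    (hP : HasDerivAt P P' ‖x‖) (hQ : HasDerivAt Q Q' ‖x‖) (hx : x ≠ 0) :
    fderiv ℝ (fun y : EuclideanSpace ℝ ι => (if k = α then P ‖y‖ else 0) + y k * y α * Q ‖y‖) x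
        (EuclideanSpace.single α 1) =
      (if k = α then P' * x α / ‖x‖ + x α * Q ‖x‖ else 0) + x k * Q ‖x‖
        + x k * (Q' / ‖x‖) * x α ^ 2 := by
  have hPα : HasFDerivAt (fun y : EuclideanSpace ℝ ι => if k = α then P ‖y‖ else 0)
      (if k = α then (P' / ‖x‖) • innerSL ℝ x else 0) x := by
    split_ifs
    exacts [hP.hasFDerivAt_comp_norm hx, hasFDerivAt_const _ _]
  have h : HasFDerivAt
      (fun y : EuclideanSpace ℝ ι => (if k = α then P ‖y‖ else 0) + y k * y α * Q ‖y‖) _ x :=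
    hPα.add (((PiLp.hasFDerivAt_apply (𝕜 := ℝ) 2 x k).mul
    (PiLp.hasFDerivAt_apply (𝕜 := ℝ) 2 x α)).mul (hQ.hasFDerivAt_comp_norm hx))
  rw [h.fderiv]
  by_cases hαk : k = α
  · subst hαk
    simp [EuclideanSpace.inner_single_right]
    ring
  · simp [hαk, EuclideanSpace.inner_single_right]
    ring

theorem sum_fderiv_radialField {P Q : ℝ → ℝ} {P' Q' : ℝ} {x : EuclideanSpace ℝ ι} (k : ι)
    (hP : HasDerivAt P P' ‖x‖) (hQ : HasDerivAt Q Q' ‖x‖) (hx : x ≠ 0) :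
    ∑ α, fderiv ℝ (fun y : EuclideanSpace ℝ ι => (if k = α then P ‖y‖ else 0) + y k * y α * Q ‖y‖)
        x (EuclideanSpace.single α 1) =
      x k * (P' / ‖x‖ + (Fintype.card ι + 1) * Q ‖x‖ + ‖x‖ * Q') := by
  simp only [fderiv_radialField_apply k _ hP hQ hx, Finset.sum_add_distrib, Finset.sum_ite_eq,
    Finset.mem_univ, if_true, Finset.sum_const, Finset.card_univ, nsmul_eq_mul]
  rw [← Finset.mul_sum, ← EuclideanSpace.real_norm_sq_eq]
  have : ‖x‖ ≠ 0 := norm_ne_zero_iff.2 hx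
  field_simp
  ring

noncomputable def coeffMatrix (a : ℝ → ℝ) (α β : ι) (y : EuclideanSpace ℝ ι) : ℝ :=
  (if α = β then 1 else 0) + a ‖y‖ * ((if α = β then 1 else 0) - y α * y β / ‖y‖ ^ 2)

theorem sum_coeffMatrix_mul (a : ℝ → ℝ) (k α : ι) {y : EuclideanSpace ℝ ι} (hy : y ≠ 0)
    (c d : ℝ) :
    ∑ β, coeffMatrix a α β y * ((if k = β then c else 0) + y k * y β * d) =
      (if k = α then (1 + a ‖y‖) * c else 0) + y k * y α * (d - a ‖y‖ * c / ‖y‖ ^ 2) := by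
  have hsummand : ∀ β, coeffMatrix a α β y * ((if k = β then c else 0) + y k * y β * d) =
      (if α = β then (1 + a ‖y‖) * ((if k = β then c else 0) + y k * y β * d) else 0)
        - a ‖y‖ * y α / ‖y‖ ^ 2 * ((if k = β then c * y β else 0) + y k * d * y β ^ 2) := by
    intro β
    unfold coeffMatrix
    split_ifs <;> ring
  simp only [hsummand, Finset.sum_sub_distrib, Finset.sum_ite_eq, Finset.mem_univ, if_true,
    ← Finset.mul_sum, Finset.sum_add_distrib]
  rw [← EuclideanSpace.real_norm_sq_eq]
  have : ‖y‖ ≠ 0 := norm_ne_zero_iff.2 hy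
  split_ifs with h
  · subst h
    field_simp
    ring
  · field_simp
    ring

theorem sum_fderiv_coeffMatrix_mul_fderiv_coord_mul_radial (k : ι) {a v : ℝ → ℝ}
    {x : EuclideanSpace ℝ ι} (hx : x ≠ 0) (ha : DifferentiableAt ℝ a ‖x‖)
    (hv : ∀ᶠ s in 𝓝 ‖x‖, DifferentiableAt ℝ v s) (hv' : DifferentiableAt ℝ (deriv v) ‖x‖) :
    ∑ α, fderiv ℝ (fun y => ∑ β, coeffMatrix a α β y *
        fderiv ℝ (fun z : EuclideanSpace ℝ ι => z k * v ‖z‖) y (EuclideanSpace.single β 1)) x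
        (EuclideanSpace.single α 1) =
      x k * (deriv (deriv v) ‖x‖ + (Fintype.card ι + 1) / ‖x‖ * deriv v ‖x‖
        - (Fintype.card ι - 1) / ‖x‖ ^ 2 * a ‖x‖ * v ‖x‖) := by
  have hflux : ∀ α, (fun y => ∑ β, coeffMatrix a α β y *
      fderiv ℝ (fun z : EuclideanSpace ℝ ι => z k * v ‖z‖) y (EuclideanSpace.single β 1)) =ᶠ[𝓝 x]
      fun y => (if k = α then (1 + a ‖y‖) * v ‖y‖ else 0) +
        y k * y α * (deriv v ‖y‖ / ‖y‖ - a ‖y‖ * v ‖y‖ / ‖y‖ ^ 2) := by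
    intro α
    filter_upwards [isOpen_ne.mem_nhds hx, (continuous_norm.tendsto x).eventually hv]
      with y hy hvy
    simp only [fderiv_coord_mul_radial_apply k _ hvy.hasDerivAt hy, sum_coeffMatrix_mul a k α hy]
  have hr : ‖x‖ ≠ 0 := norm_ne_zero_iff.2 hx
  have hvx := hv.self_of_nhds.hasDerivAt
  have hP : HasDerivAt (fun s => (1 + a s) * v s) _ ‖x‖ :=
    (ha.hasDerivAt.const_add 1).mul hvx
  have hQ : HasDerivAt (fun s => deriv v s / s - a s * v s / s ^ 2) _ ‖x‖ :=
    (hv'.hasDerivAt.div (hasDerivAt_id _) hr).sub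
      ((ha.hasDerivAt.mul hvx).div (hasDerivAt_pow 2 _) (pow_ne_zero 2 hr))
  simp only [(hflux _).fderiv_eq]
  rw [sum_fderiv_radialField k hP hQ hx]
  simp only [id, Pi.mul_apply]
  field_simp
  ring

end Euclidean

section LogLog

theorem one_lt_log_64_div {r : ℝ} (h0 : 0 < r) (h16 : r < 16) : 1 < log (64 / r) := by
  rw [lt_log_iff_exp_lt (by positivity), lt_div_iff₀ h0]
  nlinarith [exp_one_lt_d9]

theorem hasDerivAt_log_64_div {r : ℝ} (h0 : 0 < r) :
    HasDerivAt (fun s => log (64 / s)) (-r⁻¹) r := by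
  refine (((hasDerivAt_inv h0.ne').const_mul 64).log (by positivity)).congr_deriv ?_
  field_simp

theorem hasDerivAt_log_log_64_div {r : ℝ} (h0 : 0 < r) (h16 : r < 16) :
    HasDerivAt (fun s => log (log (64 / s))) (-(r * log (64 / r))⁻¹) r := by
  have hL := one_lt_log_64_div h0 h16
  refine ((hasDerivAt_log_64_div h0).log (by positivity)).congr_deriv ?_
  field_simp

theorem hasDerivAt_deriv_log_log_64_div {r : ℝ} (h0 : 0 < r) (h16 : r < 16) :
    HasDerivAt (deriv fun s => log (log (64 / s)))
      ((log (64 / r) - 1) / (r * log (64 / r)) ^ 2) r := by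
  have hL := one_lt_log_64_div h0 h16
  have hderiv : deriv (fun s => log (log (64 / s))) =ᶠ[𝓝 r] fun s => -(s * log (64 / s))⁻¹ := by
    filter_upwards [Ioo_mem_nhds h0 h16] with s hs
    exact (hasDerivAt_log_log_64_div hs.1 hs.2).deriv
  have hprod : HasDerivAt (fun s => s * log (64 / s)) _ r :=
    (hasDerivAt_id' r).mul (hasDerivAt_log_64_div h0)
  refine ((hprod.inv (by positivity)).neg.congr_of_eventuallyEq hderiv).congr_deriv ?_
  field_simp
  ring

noncomputable def tangentialCoeff (n r : ℝ) : ℝ :=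
  -(1 + n * log (64 / r)) / ((n - 1) * log (64 / r) ^ 2 * log (log (64 / r)))

theorem differentiableAt_tangentialCoeff {n r : ℝ} (hn : n ≠ 1) (h0 : 0 < r) (h16 : r < 16) :
    DifferentiableAt ℝ (tangentialCoeff n) r := by
  have hL := one_lt_log_64_div h0 h16
  have hlogL : log (log (64 / r)) ≠ 0 := (log_pos hL).ne'
  have hn' : n - 1 ≠ 0 := sub_ne_zero.2 hn
  have hd := (hasDerivAt_log_64_div h0).differentiableAt
  exact ((hd.const_mul n).const_add 1).neg.div
    (((hd.pow 2).const_mul (n - 1)).mul (hd.log (by positivity))) (by positivity)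

theorem log_log_ode {n r : ℝ} (hn : n ≠ 1) (h0 : 0 < r) (h16 : r < 16) :
    deriv (deriv fun s => log (log (64 / s))) r
      + (n + 1) / r * deriv (fun s => log (log (64 / s))) r
      - (n - 1) / r ^ 2 * tangentialCoeff n r * log (log (64 / r)) = 0 := by
  have hL := one_lt_log_64_div h0 h16
  have hlogL : log (log (64 / r)) ≠ 0 := (log_pos hL).ne'
  have hn' : n - 1 ≠ 0 := sub_ne_zero.2 hn
  rw [(hasDerivAt_deriv_log_log_64_div h0 h16).deriv, (hasDerivAt_log_log_64_div h0 h16).deriv,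
    tangentialCoeff]
  field_simp
  ring

end LogLog

theorem ode_and_pde_solution (n : ℕ) (hn : 2 ≤ n) :
    let a : ℝ → ℝ := fun r =>
      -(1 + (n : ℝ) * Real.log (64 / r)) /
        (((n : ℝ) - 1) * (Real.log (64 / r)) ^ 2 * Real.log (Real.log (64 / r)))
    let v : ℝ → ℝ := fun r => Real.log (Real.log (64 / r))
    let u : EuclideanSpace ℝ (Fin n) → ℝ := fun y => y ⟨0, by omega⟩ * v ‖y‖
    let A : Fin n → Fin n → EuclideanSpace ℝ (Fin n) → ℝ := fun α β y =>
      (if α = β then (1 : ℝ) else 0) +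
        a ‖y‖ * ((if α = β then (1 : ℝ) else 0) - y α * y β / ‖y‖ ^ 2)
    (∀ r : ℝ, 0 < r → r ≤ 4 →
      deriv (deriv v) r + ((n : ℝ) + 1) / r * deriv v r
        - ((n : ℝ) - 1) / r ^ 2 * a r * v r = 0) ∧
    (∀ x : EuclideanSpace ℝ (Fin n), x ≠ 0 → ‖x‖ < 4 →
      (∑ α : Fin n, fderiv ℝ
          (fun y => ∑ β : Fin n, A α β y * fderiv ℝ u y (EuclideanSpace.single β 1)) x
          (EuclideanSpace.single α 1)) = 0) := by
  intro a v u A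
  have hn1 : (n : ℝ) ≠ 1 := by
    have : (2 : ℝ) ≤ n := by exact_mod_cast hn
    linarith
  refine ⟨fun r h0 h4 => log_log_ode hn1 h0 (by linarith), fun x hx hx4 => ?_⟩
  have h0 : 0 < ‖x‖ := norm_pos_iff.2 hx
  have h16 : ‖x‖ < 16 := by linarith
  have hdiv := sum_fderiv_coeffMatrix_mul_fderiv_coord_mul_radial ⟨0, by omega⟩ hx
    (differentiableAt_tangentialCoeff hn1 h0 h16)
    (eventually_of_mem (Ioo_mem_nhds h0 h16) fun s hs =>
      (hasDerivAt_log_log_64_div hs.1 hs.2).differentiableAt)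
    (hasDerivAt_deriv_log_log_64_div h0 h16).differentiableAt
  rw [Fintype.card_fin, log_log_ode hn1 h0 h16, mul_zero] at hdiv
  exact hdiv
end
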